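/- For every positive integer m, the generalized robustness of entanglement of m copies of the singlet equals R_g((|ψ⁻⟩⟨ψ⁻|)^{⊗m}) = 2^m − 1, where the bipartition is Alice's m qubits versus Bob's m qubits. -/

import Mathlib

open scoped BigOperators Kronecker Matrix ComplexOrder
open Filter

noncomputable section

namespace QIT

/-- A density matrix: positive semidefinite with unit trace. -/
def IsDensityMatrix {n : Type} [Fintype n] [DecidableEq n] (ρ : Matrix n n ℂ) : Prop :=
  ρ.PosSemidef ∧ ρ.trace = 1

/-- Matrix logarithm base 2 via functional calculus (junk value `0` on
non-Hermitian input).  With the convention `Real.logb 2 0 = 0` this realizes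
the standard convention `0 · log 0 = 0` in entropic traces. -/
def matLog2 {n : Type} [Fintype n] [DecidableEq n] (A : Matrix n n ℂ) : Matrix n n ℂ :=
  if hA : A.IsHermitian then
    (hA.eigenvectorUnitary : Matrix n n ℂ) *
      Matrix.diagonal (fun i => (Real.logb 2 (hA.eigenvalues i) : ℂ)) *
      (star hA.eigenvectorUnitary : Matrix n n ℂ)
  else 0

/-- The von Neumann entropy `S(ρ) = -Tr(ρ log₂ ρ)`. -/
def vnEntropy {n : Type} [Fintype n] [DecidableEq n] (ρ : Matrix n n ℂ) : ℝ :=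
  -((ρ * matLog2 ρ).trace.re)

/-- The (finite part of the) quantum relative entropy
`S(ρ‖σ) = Tr(ρ log₂ ρ) - Tr(ρ log₂ σ)`. -/
def relEntVal {n : Type} [Fintype n] [DecidableEq n] (ρ σ : Matrix n n ℂ) : ℝ :=
  ((ρ * matLog2 ρ).trace.re) - ((ρ * matLog2 σ).trace.re)

/-- `SupportLE ρ σ` : the support of `ρ` is contained in the support of `σ`
(formulated as `ker σ ⊆ ker ρ`, which is equivalent for positive semidefinite
matrices); on this set the relative entropy is finite and given by `relEntVal`. -/
def SupportLE {n : Type} [Fintype n] [DecidableEq n] (ρ σ : Matrix n n ℂ) : Prop :=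
  ∀ v : n → ℂ, σ.mulVec v = 0 → ρ.mulVec v = 0

open Classical in
/-- Square root of a positive semidefinite matrix (junk value `0` otherwise). -/
def matSqrt {n : Type} [Fintype n] [DecidableEq n] (A : Matrix n n ℂ) : Matrix n n ℂ :=
  if hA : A.PosSemidef then
    (hA.1.eigenvectorUnitary : Matrix n n ℂ) *
      Matrix.diagonal (fun i => (Real.sqrt (hA.1.eigenvalues i) : ℂ)) *
      (star hA.1.eigenvectorUnitary : Matrix n n ℂ)
  else 0

/-- The trace norm `‖M‖₁ = Tr √(M†M)`. -/
def traceNorm {n : Type} [Fintype n] [DecidableEq n] (M : Matrix n n ℂ) : ℝ :=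
  (matSqrt (Mᴴ * M)).trace.re

/-- The fidelity `F(ρ,σ) = (Tr √(√ρ σ √ρ))²`. -/
def fidelity {n : Type} [Fintype n] [DecidableEq n] (ρ σ : Matrix n n ℂ) : ℝ :=
  ((matSqrt (matSqrt ρ * σ * matSqrt ρ)).trace.re) ^ 2

/-- `ψ` is a unit vector (pure state). -/
def PureState {n : Type} [Fintype n] (ψ : n → ℂ) : Prop :=
  ∑ x, ‖ψ x‖ ^ 2 = 1

/-- The rank-one projector `|ψ⟩⟨ψ|`. -/
def pureDM {n : Type} [Fintype n] (ψ : n → ℂ) : Matrix n n ℂ :=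
  Matrix.of fun x y => ψ x * star (ψ y)

section Bipartite

variable {nA nB mA mB : Type} [Fintype nA] [DecidableEq nA] [Fintype nB] [DecidableEq nB]
  [Fintype mA] [DecidableEq mA] [Fintype mB] [DecidableEq mB]

/-- Separability of a bipartite state on `H^A ⊗ H^B`: a convex combination of
tensor products of density matrices. -/
def IsSep (ρ : Matrix (nA × nB) (nA × nB) ℂ) : Prop :=
  ∃ (k : ℕ) (p : Fin k → ℝ) (α : Fin k → Matrix nA nA ℂ) (β : Fin k → Matrix nB nB ℂ),
    (∀ i, 0 ≤ p i) ∧ (∑ i, p i) = 1 ∧ (∀ i, IsDensityMatrix (α i)) ∧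
    (∀ i, IsDensityMatrix (β i)) ∧ ρ = ∑ i, (p i : ℂ) • (α i ⊗ₖ β i)

/-- The relative entropy of entanglement `E_r(ρ) = min_{σ separable} S(ρ‖σ)`
(the minimum over separable states; separable states whose support does not
contain that of `ρ` give `S(ρ‖σ) = +∞` and are excluded). -/
def Er (ρ : Matrix (nA × nB) (nA × nB) ℂ) : ℝ :=
  sInf {x : ℝ | ∃ σ, IsDensityMatrix σ ∧ IsSep σ ∧ SupportLE ρ σ ∧ x = relEntVal ρ σ}

/-- Partial trace over the second subsystem. -/
def ptraceB (ρ : Matrix (nA × nB) (nA × nB) ℂ) : Matrix nA nA ℂ :=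
  Matrix.of fun i j => ∑ k, ρ (i, k) (j, k)

/-- Partial trace over the first subsystem. -/
def ptraceA (ρ : Matrix (nA × nB) (nA × nB) ℂ) : Matrix nB nB ℂ :=
  Matrix.of fun i j => ∑ k, ρ (k, i) (k, j)

/-- `n`-fold tensor power of a bipartite state, with all `A`-factors grouped
together and all `B`-factors grouped together. -/
def kronPowBip (ρ : Matrix (nA × nB) (nA × nB) ℂ) (n : ℕ) :
    Matrix ((Fin n → nA) × (Fin n → nB)) ((Fin n → nA) × (Fin n → nB)) ℂ :=
  Matrix.of fun x y => ∏ t : Fin n, ρ (x.1 t, x.2 t) (y.1 t, y.2 t)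

/-- The regularized relative entropy of entanglement
`E_∞(ρ) = lim_n E_r(ρ^{⊗n})/n`. -/
def Einf (ρ : Matrix (nA × nB) (nA × nB) ℂ) : ℝ :=
  limUnder atTop (fun n : ℕ => Er (kronPowBip ρ n) / n)

end Bipartite

/-- A quantum operation: a completely positive trace-preserving linear map,
presented by a Kraus decomposition. -/
structure QuantumOp (n m : Type) [Fintype n] [DecidableEq n] [Fintype m] [DecidableEq m] where
  toFun : Matrix n n ℂ → Matrix m m ℂ
  cptp : ∃ (k : ℕ) (K : Fin k → Matrix m n ℂ),
    (∑ i, (K i)ᴴ * K i) = (1 : Matrix n n ℂ) ∧ ∀ ρ, toFun ρ = ∑ i, K i * ρ * (K i)ᴴ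

section BipartiteOps

variable {nA nB mA mB : Type} [Fintype nA] [DecidableEq nA] [Fintype nB] [DecidableEq nB]
  [Fintype mA] [DecidableEq mA] [Fintype mB] [DecidableEq mB]

/-- A quantum operation between bipartite systems is `ε`-entanglement-nonincreasing
if it increases the relative entropy of entanglement of any state by at most `ε`. -/
def BipEpsNI (Λ : QuantumOp (nA × nB) (mA × mB)) (ε : ℝ) : Prop :=
  ∀ ρ : Matrix (nA × nB) (nA × nB) ℂ, IsDensityMatrix ρ → Er (Λ.toFun ρ) - Er ρ ≤ ε

/-- `ρ` can be converted into `σ` at rate `r` by asymptotically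
entanglement-nonincreasing operations. -/
def BipAENConvertible (ρ : Matrix (nA × nB) (nA × nB) ℂ) (σ : Matrix (mA × mB) (mA × mB) ℂ)
    (r : ℝ) : Prop :=
  ∀ ε > (0 : ℝ), ∀ δ > (0 : ℝ), ∀ N : ℕ, ∃ n ≥ N,
    ∃ Λ : QuantumOp ((Fin n → nA) × (Fin n → nB))
        ((Fin ⌊r * (n : ℝ)⌋₊ → mA) × (Fin ⌊r * (n : ℝ)⌋₊ → mB)),
      BipEpsNI Λ ε ∧
      traceNorm (Λ.toFun (kronPowBip ρ n) - kronPowBip σ ⌊r * (n : ℝ)⌋₊) < δ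

/-- The optimal AEN conversion rate `R_AEN(ρ → σ)`. -/
def RAENbip (ρ : Matrix (nA × nB) (nA × nB) ℂ) (σ : Matrix (mA × mB) (mA × mB) ℂ) : ℝ :=
  sSup {r : ℝ | BipAENConvertible ρ σ r}

end BipartiteOps

/-- The singlet state vector `|ψ⁻⟩ = (|01⟩ - |10⟩)/√2`. -/
def singletVec : Fin 2 × Fin 2 → ℂ := fun x =>
  if x = (0, 1) then (Real.sqrt 2 : ℂ)⁻¹
  else if x = (1, 0) then -(Real.sqrt 2 : ℂ)⁻¹ else 0

/-- The singlet density matrix `|ψ⁻⟩⟨ψ⁻|`. -/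
def singletDM : Matrix (Fin 2 × Fin 2) (Fin 2 × Fin 2) ℂ := pureDM singletVec

/-- The generalized robustness of entanglement
`R_g(ρ) = min { s ≥ 0 : ∃ state σ, (ρ + sσ)/(1+s) separable }`. -/
def genRobustness {nA nB : Type} [Fintype nA] [DecidableEq nA] [Fintype nB] [DecidableEq nB]
    (ρ : Matrix (nA × nB) (nA × nB) ℂ) : ℝ :=
  sInf {s : ℝ | 0 ≤ s ∧ ∃ σ, IsDensityMatrix σ ∧
    IsSep ((1 + (s : ℂ))⁻¹ • (ρ + (s : ℂ) • σ))}


/-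
R_g is invariant under local unitaries, and the m-fold singlet is (1 ⊗ U^{⊗m}) ω with
U = [[0, -1], [1, 0]] and ω = Σ_x |xx⟩/√d the maximally entangled vector of dimension d = 2^m,
so it suffices to show R_g(Φ) = d - 1 for Φ = |ω⟩⟨ω|.

Lower bound: for product states Tr(Φ (α ⊗ β)) = Tr(α βᵀ)/d ≤ Tr α Tr β / d = 1/d (the middle
inequality is submultiplicativity of the Frobenius norm after writing α = CᴴC, βᵀ = DᴴD), so every
separable state has overlap at most 1/d with Φ, whereas (Φ + sσ)/(1 + s) has overlap at least
1/(1 + s).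

Upper bound: with σ = (1 - Φ)/(d² - 1) one gets (Φ + (d - 1)σ)/d = (1 + dΦ)/(d(d + 1)). Averaging
|u⟩⟨u| ⊗ |ū⟩⟨ū| over the 3^d phase vectors u(x) = ζ^{a(x)}/√d, ζ a primitive cube root of unity,
yields (1 + dΦ - Σ_z |zz⟩⟨zz|)/d², because the phase sum detects whether {x, y'} = {x', y} as
multisets; adding the product states |zz⟩⟨zz| exhibits (1 + dΦ)/(d(d + 1)) as separable.
-/

open Matrix

section TraceInequality

open scoped Matrix.Norms.Frobenius

variable {n : Type} [Fintype n]

theorem frobenius_norm_sq_eq_re_trace (M : Matrix n n ℂ) : ‖M‖ ^ 2 = (Mᴴ * M).trace.re := by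
  have hsq : ‖M‖ ^ 2 = ∑ i, ∑ j, ‖M i j‖ ^ 2 := by
    rw [frobenius_norm_def, ← Real.rpow_natCast, ← Real.rpow_mul (by positivity)]
    norm_num
  rw [hsq, Finset.sum_comm, trace, Complex.re_sum]
  refine Finset.sum_congr rfl fun j _ => ?_
  rw [diag_apply, mul_apply, Complex.re_sum]
  refine Finset.sum_congr rfl fun i _ => ?_
  rw [conjTranspose_apply, Complex.star_def, Complex.conj_mul', ← Complex.ofReal_pow,
    Complex.ofReal_re]

open scoped MatrixOrder in
theorem _root_.Matrix.PosSemidef.re_trace_mul_le [DecidableEq n] {A B : Matrix n n ℂ}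
    (hA : A.PosSemidef) (hB : B.PosSemidef) :
    (A * B).trace.re ≤ A.trace.re * B.trace.re := by
  obtain ⟨C, rfl⟩ := CStarAlgebra.nonneg_iff_eq_star_mul_self.mp hA.nonneg
  obtain ⟨D, rfl⟩ := CStarAlgebra.nonneg_iff_eq_star_mul_self.mp hB.nonneg
  simp only [star_eq_conjTranspose]
  have hcycle : (Cᴴ * C * (Dᴴ * D)).trace = ((C * Dᴴ)ᴴ * (C * Dᴴ)).trace := by
    rw [conjTranspose_mul, conjTranspose_conjTranspose, ← Matrix.mul_assoc, trace_mul_cycle,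
      Matrix.mul_assoc, Matrix.mul_assoc, Matrix.mul_assoc]
  rw [hcycle, ← frobenius_norm_sq_eq_re_trace, ← frobenius_norm_sq_eq_re_trace,
    ← frobenius_norm_sq_eq_re_trace, ← mul_pow, ← frobenius_norm_conjTranspose D]
  exact pow_le_pow_left₀ (norm_nonneg _) (frobenius_norm_mul C Dᴴ) 2

end TraceInequality

section PureStates

variable {n : Type} [Fintype n]

theorem pureDM_eq_vecMulVec (ψ : n → ℂ) : pureDM ψ = vecMulVec ψ (star ψ) := rfl

theorem isDensityMatrix_pureDM [DecidableEq n] {ψ : n → ℂ} (hψ : star ψ ⬝ᵥ ψ = 1) :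
    IsDensityMatrix (pureDM ψ) :=
  ⟨posSemidef_vecMulVec_self_star ψ, by
    rw [pureDM_eq_vecMulVec, trace_vecMulVec, dotProduct_comm, hψ]⟩

theorem pureDM_mul_self {ψ : n → ℂ} (hψ : star ψ ⬝ᵥ ψ = 1) :
    pureDM ψ * pureDM ψ = pureDM ψ := by
  rw [pureDM_eq_vecMulVec, vecMulVec_mul_vecMulVec, hψ, one_smul]

theorem trace_pureDM_mul (ψ : n → ℂ) (A : Matrix n n ℂ) :
    (pureDM ψ * A).trace = star ψ ⬝ᵥ (A *ᵥ ψ) := by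
  rw [pureDM_eq_vecMulVec, vecMulVec_mul, trace_vecMulVec, dotProduct_comm, dotProduct_mulVec]

theorem pureDM_mulVec {m : Type} [Fintype m] (M : Matrix m n ℂ) (ψ : n → ℂ) :
    pureDM (M *ᵥ ψ) = M * pureDM ψ * Mᴴ := by
  rw [pureDM_eq_vecMulVec, pureDM_eq_vecMulVec, star_mulVec, mul_vecMulVec, vecMulVec_mul]

open scoped MatrixOrder in
theorem isDensityMatrix_smul_one_sub_pureDM [DecidableEq n] [Nontrivial n] {ψ : n → ℂ}
    (hψ : star ψ ⬝ᵥ ψ = 1) :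
    IsDensityMatrix ((((Fintype.card n - 1 : ℝ)⁻¹ : ℝ) : ℂ) • (1 - pureDM ψ)) := by
  have hproj : IsStarProjection (pureDM ψ) :=
    ⟨pureDM_mul_self hψ, by rw [IsSelfAdjoint, star_eq_conjTranspose, pureDM_eq_vecMulVec,
      conjTranspose_vecMulVec, star_star]⟩
  have hn : (1 : ℝ) < Fintype.card n := by exact_mod_cast Fintype.one_lt_card
  refine ⟨hproj.one_sub.nonneg.posSemidef.smul (Complex.zero_le_real.mpr (by
    rw [inv_nonneg, sub_nonneg]; exact hn.le)), ?_⟩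
  rw [trace_smul, trace_sub, trace_one, (isDensityMatrix_pureDM hψ).2, smul_eq_mul]
  push_cast
  field_simp [sub_ne_zero.mpr (show (Fintype.card n : ℂ) ≠ 1 by exact_mod_cast hn.ne')]

end PureStates

section Separability

variable {nA nB : Type} [Fintype nA] [DecidableEq nA] [Fintype nB] [DecidableEq nB]

theorem isSep_sum_smul_kronecker {ι : Type} [Fintype ι] (p : ι → ℝ) (α : ι → Matrix nA nA ℂ)
    (β : ι → Matrix nB nB ℂ) (hp : ∀ i, 0 ≤ p i) (hsum : ∑ i, p i = 1)
    (hα : ∀ i, IsDensityMatrix (α i)) (hβ : ∀ i, IsDensityMatrix (β i)) :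
    IsSep (∑ i, (p i : ℂ) • (α i ⊗ₖ β i)) := by
  let e := (Fintype.equivFin ι).symm
  refine ⟨Fintype.card ι, p ∘ e, α ∘ e, β ∘ e, fun i => hp _, ?_, fun i => hα _,
    fun i => hβ _, (e.sum_comp fun i => (p i : ℂ) • (α i ⊗ₖ β i)).symm⟩
  rw [← hsum]
  exact e.sum_comp p

theorem IsDensityMatrix.unitary_conj {n : Type} [Fintype n] [DecidableEq n] {ρ U : Matrix n n ℂ}
    (hρ : IsDensityMatrix ρ) (hU : U ∈ unitaryGroup n ℂ) : IsDensityMatrix (U * ρ * Uᴴ) :=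
  ⟨hρ.1.mul_mul_conjTranspose_same U, by
    rw [trace_mul_cycle, ← star_eq_conjTranspose, Unitary.star_mul_self_of_mem hU,
      Matrix.one_mul, hρ.2]⟩

theorem IsSep.kronecker_conj {ρ : Matrix (nA × nB) (nA × nB) ℂ} (hρ : IsSep ρ)
    {U : Matrix nA nA ℂ} {V : Matrix nB nB ℂ} (hU : U ∈ unitaryGroup nA ℂ)
    (hV : V ∈ unitaryGroup nB ℂ) : IsSep ((U ⊗ₖ V) * ρ * (U ⊗ₖ V)ᴴ) := by
  obtain ⟨k, p, α, β, hp, hsum, hα, hβ, rfl⟩ := hρ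
  refine ⟨k, p, fun i => U * α i * Uᴴ, fun i => V * β i * Vᴴ, hp, hsum,
    fun i => (hα i).unitary_conj hU, fun i => (hβ i).unitary_conj hV, ?_⟩
  simp only [Finset.mul_sum, Finset.sum_mul, Matrix.mul_smul, Matrix.smul_mul,
    conjTranspose_kronecker, mul_kronecker_mul]

def RobustnessFeasible (ρ : Matrix (nA × nB) (nA × nB) ℂ) (s : ℝ) : Prop :=
  ∃ σ, IsDensityMatrix σ ∧ IsSep ((1 + (s : ℂ))⁻¹ • (ρ + (s : ℂ) • σ))

theorem RobustnessFeasible.kronecker_conj {ρ : Matrix (nA × nB) (nA × nB) ℂ} {s : ℝ}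
    (h : RobustnessFeasible ρ s) {U : Matrix nA nA ℂ} {V : Matrix nB nB ℂ}
    (hU : U ∈ unitaryGroup nA ℂ) (hV : V ∈ unitaryGroup nB ℂ) :
    RobustnessFeasible ((U ⊗ₖ V) * ρ * (U ⊗ₖ V)ᴴ) s := by
  obtain ⟨σ, hσ, hsep⟩ := h
  refine ⟨(U ⊗ₖ V) * σ * (U ⊗ₖ V)ᴴ, hσ.unitary_conj (kronecker_mem_unitary hU hV), ?_⟩
  convert hsep.kronecker_conj hU hV using 1
  simp only [Matrix.mul_add, Matrix.add_mul, Matrix.mul_smul, Matrix.smul_mul]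

theorem genRobustness_kronecker_conj (ρ : Matrix (nA × nB) (nA × nB) ℂ) {U : Matrix nA nA ℂ}
    {V : Matrix nB nB ℂ} (hU : U ∈ unitaryGroup nA ℂ) (hV : V ∈ unitaryGroup nB ℂ) :
    genRobustness ((U ⊗ₖ V) * ρ * (U ⊗ₖ V)ᴴ) = genRobustness ρ := by
  have hW := kronecker_mem_unitary hU hV
  have hundo : (Uᴴ ⊗ₖ Vᴴ) * ((U ⊗ₖ V) * ρ * (U ⊗ₖ V)ᴴ) * (Uᴴ ⊗ₖ Vᴴ)ᴴ = ρ := by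
    rw [← conjTranspose_kronecker, conjTranspose_conjTranspose, ← Matrix.mul_assoc,
      ← Matrix.mul_assoc, ← star_eq_conjTranspose, Unitary.star_mul_self_of_mem hW,
      Matrix.one_mul, Matrix.mul_assoc, Unitary.star_mul_self_of_mem hW, Matrix.mul_one]
  refine congrArg sInf (Set.ext fun s => and_congr_right fun _ => ⟨fun h => ?_, fun h => ?_⟩)
  · have := (show RobustnessFeasible _ s from h).kronecker_conj (Unitary.star_mem hU)
      (Unitary.star_mem hV)
    rwa [star_eq_conjTranspose, star_eq_conjTranspose, hundo] at this
  · exact (show RobustnessFeasible ρ s from h).kronecker_conj hU hV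

end Separability

section CharacterSums

theorem _root_.AddChar.map_sum_eq_prod {ι A M : Type*} [AddCommMonoid A] [CommMonoid M]
    (ψ : AddChar A M) (s : Finset ι) (f : ι → A) : ψ (∑ i ∈ s, f i) = ∏ i ∈ s, ψ (f i) := by
  induction s using Finset.cons_induction with
  | empty => simp
  | cons i s hi ih => rw [Finset.sum_cons, Finset.prod_cons, AddChar.map_add_eq_mul, ih]

theorem sum_stdAddChar_dotProduct {n : Type} [Fintype n] [DecidableEq n] {N : ℕ} [NeZero N]
    (c : n → ZMod N) :
    ∑ a : n → ZMod N, ZMod.stdAddChar (c ⬝ᵥ a) =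
      if c = 0 then (N : ℂ) ^ Fintype.card n else 0 := by
  simp_rw [dotProduct, AddChar.map_sum_eq_prod]
  rw [← Fintype.prod_sum fun i j => ZMod.stdAddChar (c i * j)]
  simp_rw [mul_comm (c _), AddChar.sum_mulShift _ (ZMod.isPrimitive_stdAddChar N), Nat.cast_ite,
    Nat.cast_zero, Fintype.prod_ite_zero, ← funext_iff, ZMod.card, Finset.prod_const,
    Finset.card_univ]
  rfl

theorem single_add_single_sub_eq_zero_iff {n R : Type} [DecidableEq n] [Ring R]
    (h2 : (2 : R) ≠ 0) (x x' y y' : n) :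
    (Pi.single x 1 + Pi.single y' 1 - (Pi.single x' 1 + Pi.single y 1) : n → R) = 0 ↔
      (x = x' ∧ y = y') ∨ (x = y ∧ x' = y') := by
  have h1 : (1 : R) ≠ 0 := fun h => h2 (by rw [← one_add_one_eq_two, h, add_zero])
  rw [sub_eq_zero, Pi.single_add_single_eq_single_add_single h1 h1, one_add_one_eq_two]
  simp [h2, eq_comm]

end CharacterSums

section MaximallyEntangled

variable {n : Type} [Fintype n] [DecidableEq n]

variable (n) in
def maxEntVec : n × n → ℂ :=
  fun p => if p.1 = p.2 then ((√(Fintype.card n) : ℝ) : ℂ)⁻¹ else 0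

theorem star_maxEntVec_dotProduct [Nonempty n] : star (maxEntVec n) ⬝ᵥ maxEntVec n = 1 := by
  simp [dotProduct, Fintype.sum_prod_type, maxEntVec, apply_ite star, ← Complex.ofReal_mul,
    ← mul_inv]

theorem maxEntDM_apply (x y x' y' : n) :
    pureDM (maxEntVec n) (x, y) (x', y') =
      if x = y ∧ x' = y' then (Fintype.card n : ℂ)⁻¹ else 0 := by
  simp only [pureDM, of_apply, maxEntVec]
  split_ifs <;> simp_all [← mul_inv, ← Complex.ofReal_mul]

theorem trace_maxEntDM_mul_kronecker (α β : Matrix n n ℂ) :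
    (pureDM (maxEntVec n) * (α ⊗ₖ β)).trace = (Fintype.card n : ℂ)⁻¹ * (α * βᵀ).trace := by
  simp only [trace, diag_apply, mul_apply, kroneckerMap_apply, Fintype.sum_prod_type,
    maxEntDM_apply, ite_and, ite_mul, zero_mul, Finset.sum_ite_irrel, Finset.sum_ite_eq,
    Finset.mem_univ, ↓reduceIte, Finset.sum_const_zero, transpose_apply, Finset.mul_sum]
  exact Finset.sum_comm

theorem re_trace_maxEntDM_mul_kronecker_le {α β : Matrix n n ℂ} (hα : IsDensityMatrix α)
    (hβ : IsDensityMatrix β) :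
    (pureDM (maxEntVec n) * (α ⊗ₖ β)).trace.re ≤ (Fintype.card n : ℝ)⁻¹ := by
  have h := hα.1.re_trace_mul_le hβ.1.transpose
  rw [trace_transpose, hα.2, hβ.2, Complex.one_re, one_mul] at h
  rw [trace_maxEntDM_mul_kronecker, ← Complex.ofReal_natCast, ← Complex.ofReal_inv,
    Complex.re_ofReal_mul]
  exact mul_le_of_le_one_right (by positivity) h

theorem re_trace_maxEntDM_mul_le_of_isSep {τ : Matrix (n × n) (n × n) ℂ} (hτ : IsSep τ) :
    (pureDM (maxEntVec n) * τ).trace.re ≤ (Fintype.card n : ℝ)⁻¹ := by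
  obtain ⟨k, p, α, β, hp, hsum, hα, hβ, rfl⟩ := hτ
  calc (pureDM (maxEntVec n) * ∑ i, (p i : ℂ) • (α i ⊗ₖ β i)).trace.re
      = ∑ i, p i * (pureDM (maxEntVec n) * (α i ⊗ₖ β i)).trace.re := by
        simp only [Finset.mul_sum, Matrix.mul_smul, trace_sum, trace_smul, Complex.re_sum,
          smul_eq_mul, Complex.re_ofReal_mul]
    _ ≤ ∑ i, p i * (Fintype.card n : ℝ)⁻¹ := by
        gcongr with i
        · exact hp i
        · exact re_trace_maxEntDM_mul_kronecker_le (hα i) (hβ i)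
    _ = (Fintype.card n : ℝ)⁻¹ := by rw [← Finset.sum_mul, hsum, one_mul]

theorem card_sub_one_le_of_robustnessFeasible [Nonempty n] {s : ℝ} (hs : 0 ≤ s)
    (h : RobustnessFeasible (pureDM (maxEntVec n)) s) : (Fintype.card n : ℝ) - 1 ≤ s := by
  obtain ⟨σ, hσ, hsep⟩ := h
  have hω := star_maxEntVec_dotProduct (n := n)
  have hσ₀ : 0 ≤ (pureDM (maxEntVec n) * σ).trace := by
    rw [trace_pureDM_mul]
    exact hσ.1.dotProduct_mulVec_nonneg _
  have hoverlap : (pureDM (maxEntVec n) *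
      ((1 + (s : ℂ))⁻¹ • (pureDM (maxEntVec n) + (s : ℂ) • σ))).trace.re =
        (1 + s)⁻¹ * (1 + s * (pureDM (maxEntVec n) * σ).trace.re) := by
    rw [Matrix.mul_smul, Matrix.mul_add, Matrix.mul_smul, pureDM_mul_self hω, trace_smul,
      trace_add, trace_smul, (isDensityMatrix_pureDM hω).2, smul_eq_mul, smul_eq_mul,
      show (1 + (s : ℂ))⁻¹ = ((1 + s)⁻¹ : ℝ) by push_cast; rfl, Complex.re_ofReal_mul,
      Complex.add_re, Complex.one_re, Complex.re_ofReal_mul]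
  have hle := re_trace_maxEntDM_mul_le_of_isSep hsep
  rw [hoverlap] at hle
  have hn : (0 : ℝ) < Fintype.card n := by exact_mod_cast Fintype.card_pos
  have ht : 0 ≤ (pureDM (maxEntVec n) * σ).trace.re := (Complex.nonneg_iff.mp hσ₀).1
  have hinv : (1 + s)⁻¹ ≤ (Fintype.card n : ℝ)⁻¹ :=
    (le_mul_of_one_le_right (by positivity) (by nlinarith)).trans hle
  rw [inv_le_inv₀ (by positivity) hn] at hinv
  linarith

end MaximallyEntangled

section PhaseVectors

variable {n : Type} [Fintype n]

def phaseVec (a : n → ZMod 3) : n → ℂ :=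
  fun x => ((√(Fintype.card n) : ℝ) : ℂ)⁻¹ * ZMod.stdAddChar (a x)

theorem star_phaseVec_dotProduct [Nonempty n] (a : n → ZMod 3) :
    star (phaseVec a) ⬝ᵥ phaseVec a = 1 := by
  have hn : (0 : ℝ) < Fintype.card n := by exact_mod_cast Fintype.card_pos
  simp [dotProduct, phaseVec, ← AddChar.map_neg_eq_conj, mul_mul_mul_comm _ (ZMod.stdAddChar _),
    ← AddChar.map_add_eq_mul, ← Complex.ofReal_mul, ← mul_inv, Real.mul_self_sqrt hn.le]

end PhaseVectors

section IsotropicState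

variable {n : Type} [Fintype n] [DecidableEq n]

theorem sum_phase_kronecker_apply (x y x' y' : n) :
    (∑ a, pureDM (phaseVec a) ⊗ₖ pureDM (star (phaseVec a))) (x, y) (x', y') =
      if (x = x' ∧ y = y') ∨ (x = y ∧ x' = y') then
        3 ^ Fintype.card n / (Fintype.card n : ℂ) ^ 2
      else 0 := by
  have hterm : ∀ a, (pureDM (phaseVec a) ⊗ₖ pureDM (star (phaseVec a))) (x, y) (x', y') =
      ((Fintype.card n : ℂ) ^ 2)⁻¹ * ZMod.stdAddChar
        ((Pi.single x 1 + Pi.single y' 1 - (Pi.single x' 1 + Pi.single y 1)) ⬝ᵥ a) := by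
    intro a
    have hn : (0 : ℝ) < Fintype.card n := by exact_mod_cast Fintype.card_pos_iff.mpr ⟨x⟩
    have hc : ((√(Fintype.card n) : ℝ) : ℂ)⁻¹ * ((√(Fintype.card n) : ℝ) : ℂ)⁻¹ =
        (Fintype.card n : ℂ)⁻¹ := by
      rw [← mul_inv, ← Complex.ofReal_mul, Real.mul_self_sqrt hn.le, Complex.ofReal_natCast]
    simp only [kroneckerMap_apply, pureDM, of_apply, phaseVec, Pi.star_apply, star_mul',
      Complex.star_def, map_inv₀, Complex.conj_ofReal, ← AddChar.inv_apply_eq_conj,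
      sub_dotProduct, add_dotProduct, single_dotProduct, one_mul, AddChar.map_sub_eq_div,
      AddChar.map_add_eq_mul, div_eq_mul_inv, mul_inv, inv_inv]
    linear_combination (((√(Fintype.card n) : ℝ) : ℂ)⁻¹ * ((√(Fintype.card n) : ℝ) : ℂ)⁻¹ +
      (Fintype.card n : ℂ)⁻¹) * ZMod.stdAddChar (a x) * ZMod.stdAddChar (a y') *
      (ZMod.stdAddChar (a x'))⁻¹ * (ZMod.stdAddChar (a y))⁻¹ * hc
  simp only [Matrix.sum_apply, hterm, ← Finset.mul_sum, sum_stdAddChar_dotProduct,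
    single_add_single_sub_eq_zero_iff (show (2 : ZMod 3) ≠ 0 by decide)]
  split_ifs <;> simp [div_eq_inv_mul]

theorem one_add_card_smul_maxEntDM_eq :
    (1 : Matrix (n × n) (n × n) ℂ) + (Fintype.card n : ℂ) • pureDM (maxEntVec n) =
      ((Fintype.card n : ℂ) ^ 2 / 3 ^ Fintype.card n) •
          ∑ a, pureDM (phaseVec a) ⊗ₖ pureDM (star (phaseVec a)) +
        ∑ z, pureDM (Pi.single z 1) ⊗ₖ pureDM (Pi.single z 1) := by
  ext ⟨x, y⟩ ⟨x', y'⟩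
  have hn : (Fintype.card n : ℂ) ≠ 0 :=
    Nat.cast_ne_zero.mpr (Fintype.card_pos_iff.mpr ⟨x⟩).ne'
  have hdiag : ∑ z, (pureDM (Pi.single z 1) ⊗ₖ pureDM (Pi.single z (1 : ℂ))) (x, y) (x', y') =
      if (x = x' ∧ y = y') ∧ (x = y ∧ x' = y') then 1 else 0 := by
    simp only [kroneckerMap_apply, pureDM, of_apply, Pi.single_apply, RCLike.star_def,
      MonoidWithZeroHom.map_ite_one_zero, mul_ite, mul_one, mul_zero, Finset.sum_ite_eq,
      Finset.mem_univ, ↓reduceIte]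
    grind
  rw [Matrix.add_apply, Matrix.add_apply, Matrix.smul_apply, Matrix.smul_apply, maxEntDM_apply,
    sum_phase_kronecker_apply, one_apply, Matrix.sum_apply, hdiag]
  simp only [Prod.mk.injEq, smul_eq_mul]
  split_ifs <;> first | (exfalso; tauto) | (field_simp; try ring)

theorem isSep_smul_one_add_card_smul_maxEntDM [Nonempty n] :
    IsSep (((Fintype.card n : ℂ) * (Fintype.card n + 1))⁻¹ •
      (1 + (Fintype.card n : ℂ) • pureDM (maxEntVec n))) := by
  have hn : (Fintype.card n : ℂ) ≠ 0 := Nat.cast_ne_zero.mpr Fintype.card_ne_zero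
  have hn1 : (Fintype.card n : ℂ) + 1 ≠ 0 := by exact_mod_cast (Fintype.card n).succ_ne_zero
  have hsep := isSep_sum_smul_kronecker (ι := (n → ZMod 3) ⊕ n)
    (Sum.elim (fun _ => Fintype.card n / (3 ^ Fintype.card n * (Fintype.card n + 1)))
      fun _ => (Fintype.card n * (Fintype.card n + 1))⁻¹)
    (Sum.elim (fun a => pureDM (phaseVec a)) fun z => pureDM (Pi.single z 1))
    (Sum.elim (fun a => pureDM (star (phaseVec a))) fun z => pureDM (Pi.single z 1))
    (by rintro (a | z) <;> simp only [Sum.elim_inl, Sum.elim_inr] <;> positivity)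
    (by
      simp only [Fintype.sum_sum_type, Sum.elim_inl, Sum.elim_inr, Finset.sum_const,
        Finset.card_univ, Fintype.card_fun, ZMod.card, nsmul_eq_mul]
      push_cast
      field_simp)
    (by
      rintro (a | z)
      · exact isDensityMatrix_pureDM (star_phaseVec_dotProduct a)
      · exact isDensityMatrix_pureDM (by simp))
    (by
      rintro (a | z)
      · exact isDensityMatrix_pureDM (by rw [star_star, dotProduct_comm, star_phaseVec_dotProduct])
      · exact isDensityMatrix_pureDM (by simp))
  convert hsep using 1
  rw [one_add_card_smul_maxEntDM_eq, Fintype.sum_sum_type]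
  simp only [smul_add, Finset.smul_sum, smul_smul, Sum.elim_inl, Sum.elim_inr]
  congr 1 <;> refine Finset.sum_congr rfl fun _ _ => ?_ <;> congr 1 <;> push_cast <;> field_simp

theorem robustnessFeasible_maxEntDM_card_sub_one [Nontrivial n] :
    RobustnessFeasible (pureDM (maxEntVec n)) (Fintype.card n - 1) := by
  refine ⟨_, isDensityMatrix_smul_one_sub_pureDM (star_maxEntVec_dotProduct (n := n)), ?_⟩
  convert isSep_smul_one_add_card_smul_maxEntDM (n := n) using 1
  have hn : (1 : ℝ) < Fintype.card n := by exact_mod_cast Fintype.one_lt_card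
  have h0 : (Fintype.card n : ℂ) ≠ 0 := by exact_mod_cast (zero_lt_one.trans hn).ne'
  have h1 : (Fintype.card n : ℂ) + 1 ≠ 0 := by exact_mod_cast (Fintype.card n).succ_ne_zero
  have h2 : (Fintype.card n : ℂ) - 1 ≠ 0 := sub_ne_zero.mpr (by exact_mod_cast hn.ne')
  rw [Fintype.card_prod]
  push_cast
  rw [show (Fintype.card n : ℂ) * Fintype.card n - 1 = (Fintype.card n - 1) * (Fintype.card n + 1)
    by ring]
  match_scalars <;> field_simp <;> ring

theorem genRobustness_maxEntDM [Nontrivial n] :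
    genRobustness (pureDM (maxEntVec n)) = Fintype.card n - 1 := by
  have hn : (1 : ℝ) ≤ Fintype.card n := by exact_mod_cast Fintype.card_pos
  have hlower : ∀ s ∈ {s : ℝ | 0 ≤ s ∧ RobustnessFeasible (pureDM (maxEntVec n)) s},
      (Fintype.card n : ℝ) - 1 ≤ s :=
    fun s hs => card_sub_one_le_of_robustnessFeasible hs.1 hs.2
  have hmem : (Fintype.card n : ℝ) - 1 ∈
      {s : ℝ | 0 ≤ s ∧ RobustnessFeasible (pureDM (maxEntVec n)) s} :=
    ⟨by linarith, robustnessFeasible_maxEntDM_card_sub_one⟩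
  exact le_antisymm (csInf_le ⟨_, hlower⟩ hmem) (le_csInf ⟨_, hmem⟩ hlower)

end IsotropicState

section KroneckerPower

variable {ι R : Type*}

def kronPow [CommMonoid R] (A : Matrix ι ι R) (m : ℕ) : Matrix (Fin m → ι) (Fin m → ι) R :=
  of fun x y => ∏ t, A (x t) (y t)

theorem kronPow_mul [Fintype ι] [DecidableEq ι] [CommSemiring R] (A B : Matrix ι ι R) (m : ℕ) :
    kronPow A m * kronPow B m = kronPow (A * B) m := by
  ext x y
  simp only [kronPow, mul_apply, of_apply]
  rw [Fintype.prod_sum fun t j => A (x t) j * B j (y t)]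
  simp only [Finset.prod_mul_distrib]

theorem conjTranspose_kronPow [CommSemiring R] [StarRing R] (A : Matrix ι ι R) (m : ℕ) :
    (kronPow A m)ᴴ = kronPow Aᴴ m := by
  ext x y
  simp [kronPow, star_prod]

theorem kronPow_one [DecidableEq ι] [CommSemiring R] (m : ℕ) :
    kronPow (1 : Matrix ι ι R) m = 1 := by
  ext x y
  simp [kronPow, one_apply, Finset.prod_ite_zero, funext_iff]

theorem kronPow_mem_unitaryGroup [Fintype ι] [DecidableEq ι] [CommRing R] [StarRing R]
    {A : Matrix ι ι R} (hA : A ∈ unitaryGroup ι R) (m : ℕ) :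
    kronPow A m ∈ unitaryGroup (Fin m → ι) R := by
  rw [mem_unitaryGroup_iff', star_eq_conjTranspose, conjTranspose_kronPow, kronPow_mul,
    ← star_eq_conjTranspose, Unitary.star_mul_self_of_mem hA, kronPow_one]

end KroneckerPower

theorem kronPowBip_pureDM {nA nB : Type} [Fintype nA] [DecidableEq nA] [Fintype nB]
    [DecidableEq nB] (ψ : nA × nB → ℂ) (m : ℕ) :
    kronPowBip (pureDM ψ) m = pureDM fun p => ∏ t, ψ (p.1 t, p.2 t) := by
  ext x y
  simp only [kronPowBip, pureDM, of_apply, star_prod, Finset.prod_mul_distrib]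

def singletRot : Matrix (Fin 2) (Fin 2) ℂ := !![0, -1; 1, 0]

theorem singletRot_mem_unitaryGroup : singletRot ∈ unitaryGroup (Fin 2) ℂ := by
  rw [mem_unitaryGroup_iff, star_eq_conjTranspose]
  ext i j
  fin_cases i <;> fin_cases j <;> simp [singletRot, mul_apply, Fin.sum_univ_two]

theorem singletVec_apply (a b : Fin 2) : singletVec (a, b) = (√2 : ℂ)⁻¹ * singletRot b a := by
  fin_cases a <;> fin_cases b <;> simp [singletVec, singletRot]

theorem singletVec_tensorPow_eq (m : ℕ) :
    (fun p : (Fin m → Fin 2) × (Fin m → Fin 2) => ∏ t, singletVec (p.1 t, p.2 t)) =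
      (1 ⊗ₖ kronPow singletRot m) *ᵥ maxEntVec (Fin m → Fin 2) := by
  have hsqrt : √((2 : ℝ) ^ m) = √2 ^ m := by
    rw [Real.sqrt_eq_iff_mul_self_eq (by positivity) (by positivity), ← mul_pow,
      Real.mul_self_sqrt zero_le_two]
  ext ⟨x, y⟩
  simp [singletVec_apply, mulVec, dotProduct, Fintype.sum_prod_type, maxEntVec, one_apply,
    kronPow, Finset.prod_mul_distrib, hsqrt, mul_comm]

/-- The generalized robustness of entanglement of `m` copies of
the singlet equals `2^m − 1` (Alice's `m` qubits versus Bob's `m` qubits). -/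
theorem robustness_of_singlets (m : ℕ) (hm : 1 ≤ m) :
    genRobustness (kronPowBip singletDM m) = (2 : ℝ) ^ m - 1 := by
  have : Nonempty (Fin m) := Fin.pos_iff_nonempty.mp hm
  rw [singletDM, kronPowBip_pureDM, singletVec_tensorPow_eq, pureDM_mulVec,
    genRobustness_kronecker_conj _ (one_mem _)
      (kronPow_mem_unitaryGroup singletRot_mem_unitaryGroup m),
    genRobustness_maxEntDM]
  simp

end QIT
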